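/- Let (X,Σ,m) be a σ-finite measure space, p ∈ (1,∞), M an L^p(m)-Banach L^∞(m)-module, and ε ∈ (0,2]. Suppose v,w ∈ M and E ∈ Σ with m(E) > 0 satisfy |v|=|w|=1 and |v-w| > ε m-a.e. on E. Then |(v+w)/2| ≤ 1 - δ_M(ε) holds m-a.e. on E, where δ_M is the modulus of convexity of the Banach space (M, ‖·‖). -/

import Mathlib

open MeasureTheory Filter
open scoped ENNReal

/-- A module structure over `L^∞(m)` on a real normed space `M`, encoded via a scalar
multiplication map `smul : L^∞(m) → M → M`; multiplication in `L^∞(m)` and constants are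
expressed via a.e. representatives. -/
structure LinftyModuleStruct {X : Type*} [MeasurableSpace X] (m : Measure X)
    (M : Type*) [NormedAddCommGroup M] [Module ℝ M] where
  smul : Lp ℝ ∞ m → M → M
  smul_add : ∀ (f : Lp ℝ ∞ m) (u v : M), smul f (u + v) = smul f u + smul f v
  add_smul : ∀ (f g : Lp ℝ ∞ m) (v : M), smul (f + g) v = smul f v + smul g v
  mul_smul : ∀ (f g h : Lp ℝ ∞ m) (v : M),
    ((h : X → ℝ) =ᵐ[m] fun x => f x * g x) → smul h v = smul f (smul g v)
  const_smul : ∀ (f : Lp ℝ ∞ m) (c : ℝ) (v : M),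
    ((f : X → ℝ) =ᵐ[m] fun _ => c) → smul f v = c • v

/-- `pn` is an `L^p(m)`-pointwise norm on the `L^∞(m)`-module `M` inducing the norm of `M`. -/
structure IsPointwiseNorm {X : Type*} [MeasurableSpace X] (m : Measure X) (p : ℝ)
    {M : Type*} [NormedAddCommGroup M] [Module ℝ M]
    (A : LinftyModuleStruct m M) (pn : M → X → ℝ) : Prop where
  memLp : ∀ v : M, MemLp (pn v) (ENNReal.ofReal p) m
  nonneg : ∀ v : M, ∀ᵐ x ∂m, 0 ≤ pn v x
  eq_zero_iff : ∀ v : M, (pn v =ᵐ[m] 0) ↔ v = 0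
  triangle : ∀ v w : M, ∀ᵐ x ∂m, pn (v + w) x ≤ pn v x + pn w x
  smul_eq : ∀ (f : Lp ℝ ∞ m) (v : M), pn (A.smul f v) =ᵐ[m] fun x => |f x| * pn v x
  norm_eq : ∀ v : M, ‖v‖ = (∫ x, pn v x ^ p ∂m) ^ (1 / p)

/-- The modulus of convexity of a normed space `V`. -/
noncomputable def modulusOfConvexity (V : Type*) [NormedAddCommGroup V] [Module ℝ V]
    (ε : ℝ) : ℝ :=
  sInf {r : ℝ | ∃ v w : V, ‖v‖ = 1 ∧ ‖w‖ = 1 ∧ ε ≤ ‖v - w‖ ∧ r = 1 - ‖(2 : ℝ)⁻¹ • (v + w)‖}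

/-! For measurable `F ⊆ E` with `0 < m F < ∞`, the normalized restrictions
`v_F = m(F)^{-1/p} 1_F · v` and `w_F` are unit vectors of `M` with `‖v_F - w_F‖ ≥ ε`, because
`‖z_F‖^p` is the mean of `|z|^p` over `F`. Hence the midpoint `u = (v + w)/2` has
`‖u_F‖ ≤ 1 - δ_M(ε)`, i.e. every such mean of `|u|^p` is at most `(1 - δ_M(ε))^p`;
by σ-finiteness this gives `|u|^p ≤ (1 - δ_M(ε))^p` a.e. on `E`. -/

theorem modulusOfConvexity_le_one (V : Type*) [NormedAddCommGroup V] [Module ℝ V] (ε : ℝ) :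
    modulusOfConvexity V ε ≤ 1 := by
  set S := {r : ℝ | ∃ v w : V, ‖v‖ = 1 ∧ ‖w‖ = 1 ∧ ε ≤ ‖v - w‖ ∧ r = 1 - ‖(2 : ℝ)⁻¹ • (v + w)‖}
  have hS : ∀ r ∈ S, r ≤ 1 := by
    rintro _ ⟨v, w, -, -, -, rfl⟩
    linarith [norm_nonneg ((2 : ℝ)⁻¹ • (v + w))]
  change sInf S ≤ 1
  by_cases hbdd : BddBelow S
  · rcases S.eq_empty_or_nonempty with hempty | ⟨r, hr⟩
    · simp [hempty]
    · exact csInf_le_of_le hbdd hr (hS r hr)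
  · simp [Real.sInf_of_not_bddBelow hbdd]

theorem norm_midpoint_le_one_sub_modulusOfConvexity {V : Type*} [NormedAddCommGroup V]
    [Module ℝ V] [NormSMulClass ℝ V] {ε : ℝ} {a b : V} (ha : ‖a‖ = 1) (hb : ‖b‖ = 1)
    (hab : ε ≤ ‖a - b‖) :
    ‖(2 : ℝ)⁻¹ • (a + b)‖ ≤ 1 - modulusOfConvexity V ε := by
  have hmid : ∀ a b : V, ‖a‖ = 1 → ‖b‖ = 1 → ‖(2 : ℝ)⁻¹ • (a + b)‖ ≤ 1 := fun a b ha hb => by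
    rw [norm_smul, Real.norm_of_nonneg (by norm_num)]
    linarith [norm_add_le a b]
  have hδ : modulusOfConvexity V ε ≤ 1 - ‖(2 : ℝ)⁻¹ • (a + b)‖ := by
    refine csInf_le ⟨0, ?_⟩ ⟨a, b, ha, hb, hab, rfl⟩
    rintro _ ⟨a', b', ha', hb', -, rfl⟩
    linarith [hmid a' b' ha' hb']
  linarith

theorem ae_le_of_forall_setAverage_le {X : Type*} [MeasurableSpace X] {m : Measure X}
    [SigmaFinite m] {g : X → ℝ} {E : Set X} {c : ℝ} (hE : MeasurableSet E)
    (hg : IntegrableOn g E m)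
    (havg : ∀ F ⊆ E, MeasurableSet F → m F ≠ 0 → m F ≠ ∞ → ⨍ x in F, g x ∂m ≤ c) :
    ∀ᵐ x ∂m, x ∈ E → g x ≤ c := by
  rw [← ae_restrict_iff' hE]
  have hpos : ∀ᵐ x ∂m.restrict E, 0 ≤ c - g x := by
    refine ae_nonneg_of_forall_setIntegral_nonneg_of_sigmaFinite
      (fun s _ hs => (integrableOn_const hs.ne).sub hg.integrableOn) fun s hs hsfin => ?_
    rw [Measure.restrict_apply hs] at hsfin
    rw [Measure.restrict_restrict hs]
    by_cases hs0 : m (s ∩ E) = 0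
    · simp [Measure.restrict_eq_zero.2 hs0]
    rw [integral_sub (integrableOn_const (C := c) hsfin.ne) (hg.mono_set Set.inter_subset_right),
      setIntegral_const, ← measure_smul_setAverage _ hsfin.ne, sub_nonneg, smul_eq_mul,
      smul_eq_mul]
    exact mul_le_mul_of_nonneg_left
      (havg _ Set.inter_subset_right (hs.inter hE) hs0 hsfin.ne) measureReal_nonneg
  exact hpos.mono fun x hx => sub_nonneg.1 hx

namespace LinftyModuleStruct

variable {X : Type*} [MeasurableSpace X] {m : Measure X}
  {M : Type*} [NormedAddCommGroup M] [Module ℝ M] (A : LinftyModuleStruct m M)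

theorem smul_comm (f : Lp ℝ ∞ m) (c : ℝ) (v : M) :
    A.smul f (c • v) = c • A.smul f v := by
  let g : Lp ℝ ∞ m := MemLp.toLp (fun _ => c) (memLp_top_const c)
  have hg : (g : X → ℝ) =ᵐ[m] fun _ => c := MemLp.coeFn_toLp _
  have hfg : ((c • f : Lp ℝ ∞ m) : X → ℝ) =ᵐ[m] fun x => f x * g x := by
    filter_upwards [Lp.coeFn_smul c f, hg] with x hcf hgx
    simp [hcf, hgx, mul_comm]
  have hgf : ((c • f : Lp ℝ ∞ m) : X → ℝ) =ᵐ[m] fun x => g x * f x := by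
    filter_upwards [hfg] with x hx
    rw [hx, mul_comm]
  -- `c • f` is both `f * g` and `g * f`, and `g` acts as the scalar `c`.
  rw [← A.const_smul g c v hg, ← A.mul_smul f g _ v hfg, A.mul_smul g f _ v hgf,
    A.const_smul g c _ hg]

def toLinearMap (f : Lp ℝ ∞ m) : M →ₗ[ℝ] M where
  toFun := A.smul f
  map_add' := A.smul_add f
  map_smul' := A.smul_comm f

noncomputable def normalizedRestriction (p : ℝ) {F : Set X} (hF : MeasurableSet F)
    (hFfin : m F ≠ ∞) : M →ₗ[ℝ] M :=
  m.real F ^ (-p⁻¹) • A.toLinearMap (indicatorConstLp ∞ hF hFfin 1)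

end LinftyModuleStruct

namespace IsPointwiseNorm

variable {X : Type*} [MeasurableSpace X] {m : Measure X}
  {M : Type*} [NormedAddCommGroup M] [Module ℝ M] {p : ℝ}
  {A : LinftyModuleStruct m M} {pn : M → X → ℝ}

theorem pn_smul (hpn : IsPointwiseNorm m p A pn) (c : ℝ) (v : M) :
    pn (c • v) =ᵐ[m] fun x => |c| * pn v x := by
  let g : Lp ℝ ∞ m := MemLp.toLp (fun _ => c) (memLp_top_const c)
  have hg : (g : X → ℝ) =ᵐ[m] fun _ => c := MemLp.coeFn_toLp _
  filter_upwards [A.const_smul g c v hg ▸ hpn.smul_eq g v, hg] with x hx hgx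
  rw [hx, hgx]

theorem integrable_rpow (hpn : IsPointwiseNorm m p A pn) (hp : 0 < p) (v : M) :
    Integrable (fun x => pn v x ^ p) m := by
  have h := (hpn.memLp v).integrable_norm_rpow (by simpa using hp) ENNReal.ofReal_ne_top
  rw [ENNReal.toReal_ofReal hp.le] at h
  refine h.congr ?_
  filter_upwards [hpn.nonneg v] with x hx
  rw [Real.norm_of_nonneg hx]

theorem integral_rpow_nonneg (hpn : IsPointwiseNorm m p A pn) (v : M) :
    0 ≤ ∫ x, pn v x ^ p ∂m :=
  integral_nonneg_of_ae <| (hpn.nonneg v).mono fun _ hx => Real.rpow_nonneg hx p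

theorem norm_rpow_eq_integral (hpn : IsPointwiseNorm m p A pn) (hp : 0 < p) (v : M) :
    ‖v‖ ^ p = ∫ x, pn v x ^ p ∂m := by
  rw [hpn.norm_eq, one_div, Real.rpow_inv_rpow (hpn.integral_rpow_nonneg v) hp.ne']

theorem normSMulClass (hpn : IsPointwiseNorm m p A pn) (hp : 0 < p) : NormSMulClass ℝ M where
  norm_smul c v := by
    have hint : ∫ x, pn (c • v) x ^ p ∂m = |c| ^ p * ∫ x, pn v x ^ p ∂m := by
      rw [← integral_const_mul]
      refine integral_congr_ae ?_
      filter_upwards [hpn.pn_smul c v, hpn.nonneg v] with x hx hv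
      rw [hx, Real.mul_rpow (abs_nonneg c) hv]
    rw [hpn.norm_eq, hpn.norm_eq, hint, Real.mul_rpow (by positivity) (hpn.integral_rpow_nonneg v),
      one_div, Real.rpow_rpow_inv (abs_nonneg c) hp.ne', Real.norm_eq_abs]

theorem norm_normalizedRestriction_rpow (hpn : IsPointwiseNorm m p A pn) (hp : 0 < p)
    {F : Set X} (hF : MeasurableSet F) (hFfin : m F ≠ ∞) (z : M) :
    ‖A.normalizedRestriction p hF hFfin z‖ ^ p = ⨍ x in F, pn z x ^ p ∂m := by
  have hc : (m.real F ^ (-p⁻¹)) ^ p = (m.real F)⁻¹ := by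
    rw [← Real.rpow_mul measureReal_nonneg, neg_mul, inv_mul_cancel₀ hp.ne', Real.rpow_neg_one]
  have hpt : (fun x => pn (A.normalizedRestriction p hF hFfin z) x ^ p) =ᵐ[m]
      F.indicator fun x => (m.real F)⁻¹ * pn z x ^ p := by
    filter_upwards [hpn.pn_smul (m.real F ^ (-p⁻¹)) _,
      hpn.smul_eq (indicatorConstLp ∞ hF hFfin 1) z,
      indicatorConstLp_coeFn (p := ∞) (hs := hF) (hμs := hFfin) (c := (1 : ℝ)), hpn.nonneg z]
      with x hc' hsm hind hz
    simp only [LinftyModuleStruct.normalizedRestriction, LinearMap.smul_apply,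
      LinftyModuleStruct.toLinearMap, LinearMap.coe_mk, AddHom.coe_mk]
    rw [hc', hsm, hind]
    by_cases hx : x ∈ F
    · simp only [Set.indicator_of_mem hx, abs_one, one_mul]
      rw [Real.mul_rpow (by positivity) hz, abs_of_nonneg (by positivity), hc]
    · simp [Set.indicator_of_notMem hx, Real.zero_rpow hp.ne']
  rw [hpn.norm_rpow_eq_integral hp, integral_congr_ae hpt, integral_indicator hF,
    integral_const_mul, setAverage_eq, smul_eq_mul]

theorem norm_normalizedRestriction_eq_one (hpn : IsPointwiseNorm m p A pn) (hp : 0 < p)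
    {F : Set X} (hF : MeasurableSet F) (hF0 : m F ≠ 0) (hFfin : m F ≠ ∞) {z : M}
    (hz : ∀ᵐ x ∂m, x ∈ F → pn z x = 1) :
    ‖A.normalizedRestriction p hF hFfin z‖ = 1 := by
  have h : ⨍ x in F, pn z x ^ p ∂m = ⨍ _ in F, (1 : ℝ) ∂m :=
    setAverage_congr_fun hF <| hz.mono fun x hx hxF => by rw [hx hxF, Real.one_rpow]
  rwa [← hpn.norm_normalizedRestriction_rpow hp hF hFfin, setAverage_const hF0 hFfin,
    ← Real.one_rpow p, Real.rpow_left_inj (norm_nonneg _) zero_le_one hp.ne'] at h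

theorem le_norm_normalizedRestriction (hpn : IsPointwiseNorm m p A pn) (hp : 0 < p)
    {F : Set X} (hF : MeasurableSet F) (hF0 : m F ≠ 0) (hFfin : m F ≠ ∞) {z : M} {c : ℝ}
    (hz : ∀ᵐ x ∂m, x ∈ F → c ≤ pn z x) :
    c ≤ ‖A.normalizedRestriction p hF hFfin z‖ := by
  rcases le_or_gt c 0 with hc | hc
  · exact hc.trans (norm_nonneg _)
  rw [← Real.rpow_le_rpow_iff hc.le (norm_nonneg _) hp, hpn.norm_normalizedRestriction_rpow hp,
    setAverage_eq, measureReal_def, smul_eq_mul, le_inv_mul_iff₀ (ENNReal.toReal_pos hF0 hFfin),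
    ← measureReal_def]
  calc m.real F * c ^ p = ∫ _ in F, c ^ p ∂m := by rw [setIntegral_const, smul_eq_mul]
    _ ≤ ∫ x in F, pn z x ^ p ∂m :=
      setIntegral_mono_ae_restrict (integrableOn_const hFfin)
        (hpn.integrable_rpow hp z).integrableOn <| by
          filter_upwards [(ae_restrict_iff' hF).2 hz] with x hx
          exact Real.rpow_le_rpow hc.le hx hp.le

end IsPointwiseNorm

theorem pointwise_midpoint_bound_of_pointwise_norm_general
    {X : Type*} [MeasurableSpace X] (m : Measure X) [SigmaFinite m]
    {M : Type*} [NormedAddCommGroup M] [Module ℝ M]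
    (p : ℝ) (hp : 1 < p)
    (A : LinftyModuleStruct m M) (pn : M → X → ℝ) (hpn : IsPointwiseNorm m p A pn)
    (ε : ℝ)
    (v w : M) (E : Set X) (hE : MeasurableSet E)
    (hv : ∀ᵐ x ∂m, x ∈ E → pn v x = 1)
    (hw : ∀ᵐ x ∂m, x ∈ E → pn w x = 1)
    (hvw : ∀ᵐ x ∂m, x ∈ E → ε < pn (v - w) x) :
    ∀ᵐ x ∂m, x ∈ E → pn ((2 : ℝ)⁻¹ • (v + w)) x ≤ 1 - modulusOfConvexity M ε := by
  have hp0 : 0 < p := zero_lt_one.trans hp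
  have := hpn.normSMulClass hp0
  set u := (2 : ℝ)⁻¹ • (v + w)
  have havg : ∀ F ⊆ E, MeasurableSet F → m F ≠ 0 → m F ≠ ∞ →
      ⨍ x in F, pn u x ^ p ∂m ≤ (1 - modulusOfConvexity M ε) ^ p := by
    intro F hFE hF hF0 hFfin
    have onF {P : X → Prop} (h : ∀ᵐ x ∂m, x ∈ E → P x) : ∀ᵐ x ∂m, x ∈ F → P x :=
      h.mono fun x hx hxF => hx (hFE hxF)
    set N := A.normalizedRestriction p hF hFfin
    have hNu : ‖N u‖ ≤ 1 - modulusOfConvexity M ε := by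
      simpa only [u, map_smul, map_add] using norm_midpoint_le_one_sub_modulusOfConvexity
        (hpn.norm_normalizedRestriction_eq_one hp0 hF hF0 hFfin (onF hv))
        (hpn.norm_normalizedRestriction_eq_one hp0 hF hF0 hFfin (onF hw))
        (map_sub N v w ▸ hpn.le_norm_normalizedRestriction hp0 hF hF0 hFfin
          ((onF hvw).mono fun x hx hxF => (hx hxF).le))
    rw [← hpn.norm_normalizedRestriction_rpow hp0 hF hFfin]
    exact Real.rpow_le_rpow (norm_nonneg _) hNu hp0.le
  filter_upwards [ae_le_of_forall_setAverage_le hE (hpn.integrable_rpow hp0 u).integrableOn havg,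
    hpn.nonneg u] with x hx hx0 hxE
  exact (Real.rpow_le_rpow_iff hx0 (sub_nonneg.2 (modulusOfConvexity_le_one M ε)) hp0).1 (hx hxE)

/-- In an `L^p(m)`-Banach `L^∞(m)`-module, if `|v| = |w| = 1` and `|v - w| > ε` a.e. on a set
`E` of positive measure, then `|(v+w)/2| ≤ 1 - δ_M(ε)` a.e. on `E`. -/
theorem pointwise_midpoint_bound_of_pointwise_norm
    {X : Type*} [MeasurableSpace X] (m : Measure X) [SigmaFinite m]
    {M : Type*} [NormedAddCommGroup M] [Module ℝ M] [CompleteSpace M]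
    (p : ℝ) (hp : 1 < p)
    (A : LinftyModuleStruct m M) (pn : M → X → ℝ) (hpn : IsPointwiseNorm m p A pn)
    (ε : ℝ) (hε : ε ∈ Set.Ioc (0 : ℝ) 2)
    (v w : M) (E : Set X) (hE : MeasurableSet E) (hEpos : 0 < m E)
    (hv : ∀ᵐ x ∂m, x ∈ E → pn v x = 1)
    (hw : ∀ᵐ x ∂m, x ∈ E → pn w x = 1)
    (hvw : ∀ᵐ x ∂m, x ∈ E → ε < pn (v - w) x) :
    ∀ᵐ x ∂m, x ∈ E → pn ((2 : ℝ)⁻¹ • (v + w)) x ≤ 1 - modulusOfConvexity M ε :=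
  pointwise_midpoint_bound_of_pointwise_norm_general m p hp A pn hpn ε v w E hE hv hw hvw
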